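/- Open mapping theorem for bicomplex modules: Let X and Y be F-𝔹ℂ modules and T : X → Y a surjective 𝔹ℂ-linear map with closed graph. Then T is 𝔻-bounded and T is an open map. -/

import Mathlib

noncomputable section

/-- Bicomplex numbers 𝔹ℂ in idempotent coordinates: Z = e₁z₁ + e₂z₂ ↔ (z₁, z₂). -/
abbrev BC := ℂ × ℂ

/-- Hyperbolic numbers 𝔻 in idempotent coordinates: α = α₁e₁ + α₂e₂ ↔ (α₁, α₂). -/
abbrev Hyp := ℝ × ℝ

/-- Positive hyperbolic numbers 𝔻⁺. -/
def Dpos : Set Hyp := {a | 0 ≤ a.1 ∧ 0 ≤ a.2}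

/-- The partial order α ≤ β iff β - α ∈ 𝔻⁺. -/
def dle (a b : Hyp) : Prop := b - a ∈ Dpos

/-- The hyperbolic-valued norm |Z|_k = e₁|z₁| + e₂|z₂| of a bicomplex number. -/
def knorm (z : BC) : Hyp := (‖z.1‖, ‖z.2‖)

/-- The Euclidean modulus of a hyperbolic number α = β₁ + kβ₂, √(β₁² + β₂²),
expressed in idempotent coordinates. -/
def emod (d : Hyp) : ℝ := Real.sqrt ((d.1 ^ 2 + d.2 ^ 2) / 2)

/-- A hyperbolic-valued norm on a 𝔹ℂ-module X. -/
structure HNorm (X : Type*) [AddCommGroup X] [Module BC X] where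
  toFun : X → Hyp
  pos : ∀ x, toFun x ∈ Dpos
  eq_zero_iff : ∀ x, toFun x = 0 ↔ x = 0
  hsmul : ∀ (μ : BC) (x : X), toFun (μ • x) = knorm μ * toFun x
  triangle : ∀ x y, dle (toFun (x + y)) (toFun x + toFun y)

/-- A hyperbolic seminorm on a 𝔹ℂ-module X. -/
structure HSeminorm (X : Type*) [AddCommGroup X] [Module BC X] where
  toFun : X → Hyp
  pos : ∀ x, toFun x ∈ Dpos
  hsmul : ∀ (μ : BC) (x : X), toFun (μ • x) = knorm μ * toFun x
  triangle : ∀ x y, dle (toFun (x + y)) (toFun x + toFun y)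

variable {X : Type*} [AddCommGroup X] [Module BC X]

/-- The real-valued distance induced by a hyperbolic norm. -/
def HNorm.dist (N : HNorm X) (x y : X) : ℝ := emod (N.toFun (x - y))

/-- Convergence of a sequence with respect to a hyperbolic norm. -/
def TendstoH (N : HNorm X) (u : ℕ → X) (l : X) : Prop :=
  ∀ ε > (0 : ℝ), ∃ n₀, ∀ n ≥ n₀, N.dist (u n) l < ε

/-- Cauchy sequences with respect to a hyperbolic norm. -/
def CauchyH (N : HNorm X) (u : ℕ → X) : Prop :=
  ∀ ε > (0 : ℝ), ∃ n₀, ∀ m ≥ n₀, ∀ n ≥ n₀, N.dist (u m) (u n) < ε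

/-- X is an F-𝔹ℂ module: every Cauchy sequence converges. -/
def CompleteH (N : HNorm X) : Prop :=
  ∀ u : ℕ → X, CauchyH N u → ∃ l, TendstoH N u l

/-- The series Σ xₖ converges to s in X. -/
def SumToH (N : HNorm X) (x : ℕ → X) (s : X) : Prop :=
  TendstoH N (fun n => ∑ k ∈ Finset.range n, x k) s

/-- Convergence of a sequence of hyperbolic numbers. -/
def TendstoD (u : ℕ → Hyp) (l : Hyp) : Prop :=
  ∀ ε > (0 : ℝ), ∃ n₀, ∀ n ≥ n₀, emod (u n - l) < ε

/-- The series Σ dₖ of hyperbolic numbers converges to L. -/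
def SumToD (d : ℕ → Hyp) (L : Hyp) : Prop :=
  TendstoD (fun n => ∑ k ∈ Finset.range n, d k) L

/-- Open sets in the topology induced by a hyperbolic norm. -/
def IsOpenH (N : HNorm X) (U : Set X) : Prop :=
  ∀ x ∈ U, ∃ ε > (0 : ℝ), ∀ y, N.dist y x < ε → y ∈ U

/-- Dense sets in the topology induced by a hyperbolic norm. -/
def DenseH (N : HNorm X) (U : Set X) : Prop :=
  ∀ x : X, ∀ ε > (0 : ℝ), ∃ y ∈ U, N.dist y x < ε

/-- The closure of a set in the topology induced by a hyperbolic norm. -/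
def ClosureH (N : HNorm X) (S : Set X) : Set X :=
  {x | ∀ ε > (0 : ℝ), ∃ y ∈ S, N.dist y x < ε}

/-- Continuity of a 𝔻-valued map on X (w.r.t. the hyperbolic-norm topology on X and
the Euclidean topology on 𝔻). -/
def ContinuousHD (N : HNorm X) (p : X → Hyp) : Prop :=
  ∀ x : X, ∀ ε > (0 : ℝ), ∃ δ > (0 : ℝ), ∀ y, N.dist y x < δ → emod (p y - p x) < ε

/-- A hyperbolic seminorm is countably subadditive if whenever Σ xₖ converges to x in X and
Σ p(xₖ) converges to L in 𝔻, we have p(x) ≤ L. -/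
def CountablySubadditive (N : HNorm X) (p : HSeminorm X) : Prop :=
  ∀ (x : ℕ → X) (s : X) (L : Hyp),
    SumToH N x s → SumToD (fun k => p.toFun (x k)) L → dle (p.toFun s) L

section Maps

variable {Y : Type*} [AddCommGroup Y] [Module BC Y]

/-- 𝔹ℂ-linearity of a map between 𝔹ℂ-modules. -/
def IsBCLinear (T : X → Y) : Prop :=
  (∀ x y, T (x + y) = T x + T y) ∧ ∀ (μ : BC) (x : X), T (μ • x) = μ • T x

/-- Continuity of a map between hyperbolic normed modules. -/
def ContinuousMapH (NX : HNorm X) (NY : HNorm Y) (T : X → Y) : Prop :=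
  ∀ x : X, ∀ ε > (0 : ℝ), ∃ δ > (0 : ℝ), ∀ y, NX.dist y x < δ → NY.dist (T y) (T x) < ε

/-- The graph of T is closed: xₙ → x and Txₙ → y imply Tx = y. -/
def ClosedGraphH (NX : HNorm X) (NY : HNorm Y) (T : X → Y) : Prop :=
  ∀ (u : ℕ → X) (x : X) (y : Y),
    TendstoH NX u x → TendstoH NY (fun n => T (u n)) y → T x = y

/-- T is an open map: images of open sets are open. -/
def IsOpenMapH (NX : HNorm X) (NY : HNorm Y) (T : X → Y) : Prop :=
  ∀ U : Set X, IsOpenH NX U → IsOpenH NY (T '' U)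

end Maps


/-! ### Auxiliary lemmas for the proof -/

section AuxOM

lemma emod_nonneg' (d : Hyp) : 0 ≤ emod d := Real.sqrt_nonneg _

lemma dle_iff' {a b : Hyp} : dle a b ↔ a.1 ≤ b.1 ∧ a.2 ≤ b.2 := by
  unfold dle Dpos
  simp only [Set.mem_setOf_eq, Prod.fst_sub, Prod.snd_sub, sub_nonneg]

lemma emod_eq_zero_iff' (d : Hyp) : emod d = 0 ↔ d = 0 := by
  unfold emod
  rw [Real.sqrt_eq_zero']
  constructor
  · intro h
    have h1 : d.1 = 0 := by nlinarith [sq_nonneg d.1, sq_nonneg d.2]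
    have h2 : d.2 = 0 := by nlinarith [sq_nonneg d.1, sq_nonneg d.2]
    exact Prod.ext h1 h2
  · rintro rfl; norm_num

lemma emod_mono' {a b : Hyp} (ha1 : 0 ≤ a.1) (ha2 : 0 ≤ a.2)
    (h1 : a.1 ≤ b.1) (h2 : a.2 ≤ b.2) : emod a ≤ emod b := by
  apply Real.sqrt_le_sqrt; nlinarith

lemma emod_eq_abs' (d : Hyp) : emod d = ‖(⟨d.1, d.2⟩ : ℂ)‖ / Real.sqrt 2 := by
  unfold emod
  rw [Real.sqrt_div' _ (by norm_num : (0:ℝ) ≤ 2), Complex.norm_def, Complex.normSq_mk]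
  ring_nf

lemma emod_add_le' (a b : Hyp) : emod (a + b) ≤ emod a + emod b := by
  rw [emod_eq_abs', emod_eq_abs', emod_eq_abs', ← add_div]
  gcongr
  have : (⟨(a+b).1, (a+b).2⟩ : ℂ) = ⟨a.1, a.2⟩ + ⟨b.1, b.2⟩ := by
    apply Complex.ext <;> simp
  rw [this]
  exact norm_add_le _ _

lemma emod_smul' (c : ℝ) (a : Hyp) : emod (c * a.1, c * a.2) = |c| * emod a := by
  unfold emod
  rw [show ((c*a.1)^2 + (c*a.2)^2)/2 = c^2 * ((a.1^2+a.2^2)/2) by ring,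
     Real.sqrt_mul (sq_nonneg c), Real.sqrt_sq_eq_abs]

lemma emod_single1' (t : ℝ) (ht : 0 ≤ t) : emod (t, 0) = t / Real.sqrt 2 := by
  unfold emod
  norm_num
  rw [Real.sqrt_sq ht]

lemma emod_single2' (t : ℝ) (ht : 0 ≤ t) : emod (0, t) = t / Real.sqrt 2 := by
  unfold emod
  norm_num
  rw [Real.sqrt_sq ht]

variable {X : Type*} [AddCommGroup X] [Module BC X]

lemma HNorm.neg_eq (N : HNorm X) (x : X) : N.toFun (-x) = N.toFun x := by
  have h := N.hsmul (-1 : BC) x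
  rw [neg_one_smul] at h
  rw [h]
  have hk : knorm (-1 : BC) = 1 := by
    unfold knorm
    simp [Prod.ext_iff]
  rw [hk, one_mul]

/-- The real-valued group norm induced by a hyperbolic norm. -/
def HNorm.agn (N : HNorm X) : AddGroupNorm X where
  toFun x := emod (N.toFun x)
  map_zero' := by
    show emod (N.toFun 0) = 0
    rw [(N.eq_zero_iff 0).mpr rfl]
    unfold emod; norm_num
  add_le' x y := by
    have ht := dle_iff'.mp (N.triangle x y)
    calc emod (N.toFun (x + y)) ≤ emod (N.toFun x + N.toFun y) :=
          emod_mono' (N.pos _).1 (N.pos _).2 ht.1 ht.2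
      _ ≤ _ := emod_add_le' _ _
  neg' x := by
    show emod (N.toFun (-x)) = emod (N.toFun x)
    rw [HNorm.neg_eq]
  eq_zero_of_map_eq_zero' x h := (N.eq_zero_iff x).mp ((emod_eq_zero_iff' _).mp h)

/-- The normed group structure induced by a hyperbolic norm. -/
@[reducible]
def HNorm.nacg (N : HNorm X) : NormedAddCommGroup X :=
  AddGroupNorm.toNormedAddCommGroup N.agn

section Bridge

variable [MetricSpace X] (N : HNorm X) (hd : ∀ x y : X, dist x y = N.dist x y)
include hd

lemma tendstoH_iff' (u : ℕ → X) (l : X) :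
    TendstoH N u l ↔ Filter.Tendsto u Filter.atTop (nhds l) := by
  rw [Metric.tendsto_atTop]
  unfold TendstoH
  simp only [hd]

lemma cauchyH_iff' (u : ℕ → X) : CauchyH N u ↔ CauchySeq u := by
  rw [Metric.cauchySeq_iff]
  unfold CauchyH
  simp only [hd]

lemma isOpenH_iff' (U : Set X) : IsOpenH N U ↔ IsOpen U := by
  rw [Metric.isOpen_iff]
  constructor
  · intro h x hx
    obtain ⟨ε, hε, hb⟩ := h x hx
    exact ⟨ε, hε, fun y hy => hb y (by rw [← hd]; exact Metric.mem_ball.mp hy)⟩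
  · intro h x hx
    obtain ⟨ε, hε, hb⟩ := h x hx
    exact ⟨ε, hε, fun y hy => hb (Metric.mem_ball.mpr (by rw [hd]; exact hy))⟩

end Bridge

end AuxOM

/-- Open mapping theorem for bicomplex modules: a surjective 𝔹ℂ-linear map between
F-𝔹ℂ modules with closed graph is 𝔻-bounded and open. -/
theorem open_mapping {X Y : Type*} [AddCommGroup X] [Module BC X]
    [AddCommGroup Y] [Module BC Y]
    (NX : HNorm X) (NY : HNorm Y) (hCX : CompleteH NX) (hCY : CompleteH NY)
    (T : X → Y) (hlin : IsBCLinear T) (hsurj : Function.Surjective T)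
    (hG : ClosedGraphH NX NY T) :
    (∃ α ∈ Dpos, ∀ x : X, dle (NY.toFun (T x)) (α * NX.toFun x)) ∧
      IsOpenMapH NX NY T := by
  letI iX : NormedAddCommGroup X := NX.nacg
  letI iY : NormedAddCommGroup Y := NY.nacg
  have hdX : ∀ x y : X, dist x y = NX.dist x y := fun x y => by rw [dist_eq_norm]; rfl
  have hdY : ∀ x y : Y, dist x y = NY.dist x y := fun x y => by rw [dist_eq_norm]; rfl
  have hnX : ∀ x : X, ‖x‖ = emod (NX.toFun x) := fun x => rfl
  have hnY : ∀ y : Y, ‖y‖ = emod (NY.toFun y) := fun y => rfl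
  letI mX : Module ℝ X := Module.compHom X (algebraMap ℝ BC)
  letI mY : Module ℝ Y := Module.compHom Y (algebraMap ℝ BC)
  have hsX : ∀ (r : ℝ) (x : X), r • x = (((r : ℂ), (r : ℂ)) : BC) • x := fun r x => rfl
  have hsY : ∀ (r : ℝ) (y : Y), r • y = (((r : ℂ), (r : ℂ)) : BC) • y := fun r y => rfl
  have hkr : ∀ r : ℝ, knorm (((r : ℂ), (r : ℂ)) : BC) = (|r|, |r|) := by
    intro r; unfold knorm; simp
  have keyX : ∀ (r : ℝ) (x : X), ‖r • x‖ = |r| * ‖x‖ := by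
    intro r x
    rw [hnX, hnX, hsX, NX.hsmul, hkr]
    rw [show ((|r|, |r|) : Hyp) * NX.toFun x
        = (|r| * (NX.toFun x).1, |r| * (NX.toFun x).2) from rfl,
      emod_smul', abs_abs]
  have keyY : ∀ (r : ℝ) (y : Y), ‖r • y‖ = |r| * ‖y‖ := by
    intro r y
    rw [hnY, hnY, hsY, NY.hsmul, hkr]
    rw [show ((|r|, |r|) : Hyp) * NY.toFun y
        = (|r| * (NY.toFun y).1, |r| * (NY.toFun y).2) from rfl,
      emod_smul', abs_abs]
  letI nsX : NormedSpace ℝ X := ⟨fun r x => le_of_eq (by rw [keyX, Real.norm_eq_abs])⟩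
  letI nsY : NormedSpace ℝ Y := ⟨fun r y => le_of_eq (by rw [keyY, Real.norm_eq_abs])⟩
  haveI cX : CompleteSpace X := Metric.complete_of_cauchySeq_tendsto (fun u hu => by
    obtain ⟨l, hl⟩ := hCX u ((cauchyH_iff' NX hdX u).mpr hu)
    exact ⟨l, (tendstoH_iff' NX hdX u l).mp hl⟩)
  haveI cY : CompleteSpace Y := Metric.complete_of_cauchySeq_tendsto (fun u hu => by
    obtain ⟨l, hl⟩ := hCY u ((cauchyH_iff' NY hdY u).mpr hu)
    exact ⟨l, (tendstoH_iff' NY hdY u l).mp hl⟩)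
  let g : X →ₗ[ℝ] Y :=
    { toFun := T
      map_add' := hlin.1
      map_smul' := fun r x => by
        simp only [RingHom.id_apply]
        rw [hsX, hsY]
        exact hlin.2 _ _ }
  have hcont : Continuous g := by
    apply g.continuous_of_seq_closed_graph
    intro u x y hu hTu
    have h1 : TendstoH NX u x := (tendstoH_iff' NX hdX u x).mpr hu
    have h2 : TendstoH NY (fun n => T (u n)) y :=
      (tendstoH_iff' NY hdY (fun n => T (u n)) y).mpr hTu
    exact (hG u x y h1 h2).symm
  let f : X →L[ℝ] Y := ⟨g, hcont⟩
  have hf : ∀ x, f x = T x := fun x => rfl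
  set C := ‖f‖ with hCdef
  have hC0 : (0:ℝ) ≤ C := norm_nonneg f
  have hs2 : (0:ℝ) < Real.sqrt 2 := by positivity
  have compbound : ∀ (x : X),
      (NY.toFun (T x)).1 ≤ C * (NX.toFun x).1 ∧
      (NY.toFun (T x)).2 ≤ C * (NX.toFun x).2 := by
    intro x
    set a := NX.toFun x with ha
    set b := NY.toFun (T x) with hb
    constructor
    · have hle := f.le_opNorm ((((1:ℂ), (0:ℂ)) : BC) • x)
      rw [hf, hlin.2, hnY, hnX, NY.hsmul, NX.hsmul] at hle
      have hk1 : knorm (((1:ℂ), (0:ℂ)) : BC) = ((1:ℝ), (0:ℝ)) := by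
        unfold knorm; simp
      rw [hk1] at hle
      have e1 : (((1:ℝ), (0:ℝ)) : Hyp) * b = (b.1, 0) := by
        simp [Prod.ext_iff]
      have e2 : (((1:ℝ), (0:ℝ)) : Hyp) * a = (a.1, 0) := by
        simp [Prod.ext_iff]
      rw [e1, e2, emod_single1' _ (NY.pos (T x)).1, emod_single1' _ (NX.pos x).1] at hle
      have h2 := mul_le_mul_of_nonneg_right hle hs2.le
      rw [div_mul_cancel₀ _ hs2.ne', mul_assoc, div_mul_cancel₀ _ hs2.ne'] at h2
      exact h2
    · have hle := f.le_opNorm ((((0:ℂ), (1:ℂ)) : BC) • x)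
      rw [hf, hlin.2, hnY, hnX, NY.hsmul, NX.hsmul] at hle
      have hk1 : knorm (((0:ℂ), (1:ℂ)) : BC) = ((0:ℝ), (1:ℝ)) := by
        unfold knorm; simp
      rw [hk1] at hle
      have e1 : (((0:ℝ), (1:ℝ)) : Hyp) * b = (0, b.2) := by
        simp [Prod.ext_iff]
      have e2 : (((0:ℝ), (1:ℝ)) : Hyp) * a = (0, a.2) := by
        simp [Prod.ext_iff]
      rw [e1, e2, emod_single2' _ (NY.pos (T x)).2, emod_single2' _ (NX.pos x).2] at hle
      have h2 := mul_le_mul_of_nonneg_right hle hs2.le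
      rw [div_mul_cancel₀ _ hs2.ne', mul_assoc, div_mul_cancel₀ _ hs2.ne'] at h2
      exact h2
  constructor
  · refine ⟨(C, C), ⟨hC0, hC0⟩, fun x => ?_⟩
    rw [dle_iff']
    refine ⟨?_, ?_⟩
    · simpa [Prod.fst_mul] using (compbound x).1
    · simpa [Prod.snd_mul] using (compbound x).2
  · intro U hU
    have hopen := (f.isOpenMap hsurj) U ((isOpenH_iff' NX hdX U).mp hU)
    exact (isOpenH_iff' NY hdY (T '' U)).mpr hopen
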